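/- Let d ≥ 1 and L ≥ 2 be integers, and let G be the torus graph on (ZMod L)^d. For distinct vertices u, v, let P(u, v) denote the (finite, nonempty) set of geodesics from u to v, i.e., walks from u to v in G whose length equals dist_G(u, v); for an edge e of G, let N_e(u, v) be the number of geodesics in P(u, v) that traverse e (i.e., whose edge list contains e), and let N(u, v) = |P(u, v)|. Then for any two edges e and e′ of G, the sum over all ordered pairs (u, v) of distinct vertices of N_e(u, v)/N(u, v) equals the sum over all ordered pairs (u, v) of distinct vertices of N_{e′}(u, v)/N(u, v). -/

import Mathlib

/-- The torus graph on `(ZMod L)^d`: distinct vertices `u, v` are adjacent iff there is a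
coordinate `i` with `v = u + Pi.single i 1` or `v = u + Pi.single i (-1)`. -/
def torusGraph (d L : ℕ) : SimpleGraph (Fin d → ZMod L) where
  Adj u v := u ≠ v ∧ ∃ i : Fin d, v = u + Pi.single i 1 ∨ v = u + Pi.single i (-1)
  symm := by
    constructor
    rintro u v ⟨hne, i, h | h⟩
    · exact ⟨hne.symm, i, Or.inr (by simp [h, Pi.single_neg, sub_eq_add_neg])⟩
    · exact ⟨hne.symm, i, Or.inl (by simp [h, Pi.single_neg, sub_eq_add_neg])⟩
  loopless := ⟨fun u h => h.1 rfl⟩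

/-- The number of geodesics (shortest walks) from `u` to `v` in the torus graph. -/
noncomputable def geodesicCount (d L : ℕ) (u v : Fin d → ZMod L) : ℕ :=
  {p : (torusGraph d L).Walk u v | p.length = (torusGraph d L).dist u v}.ncard

/-- The number of geodesics from `u` to `v` in the torus graph that traverse the edge `e`. -/
noncomputable def geodesicCountThrough (d L : ℕ) (u v : Fin d → ZMod L)
    (e : Sym2 (Fin d → ZMod L)) : ℕ :=
  {p : (torusGraph d L).Walk u v |
    p.length = (torusGraph d L).dist u v ∧ e ∈ p.edges}.ncard

/-!
The torus graph is edge-transitive: every edge is a translate of some `s(0, Pi.single i 1)`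
(the edge `{a, a - eᵢ}` being the translate by `a - eᵢ`), and permuting coordinates carries
`Pi.single i 1` to `Pi.single j 1`. A graph automorphism maps the geodesics from `u` to `v`
bijectively onto those from `φ u` to `φ v`, matching the ones through `e` with the ones through
`φ e`, so reindexing both sums by an automorphism sending `e` to `e'` proves the identity.
-/

namespace SimpleGraph

variable {V W : Type*} {G : SimpleGraph V} {G' : SimpleGraph W}

lemma Walk.copy_map_of_forall_eq {f : G →g G} (hf : ∀ x, f x = x) {u v : V} (p : G.Walk u v) :
    (p.map f).copy (hf u) (hf v) = p := by
  obtain rfl : f = Hom.id := RelHom.ext hf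
  exact p.map_id

namespace Iso

def mapWalk (φ : G ≃g G') (u v : V) : G.Walk u v ≃ G'.Walk (φ u) (φ v) where
  toFun p := p.map φ.toHom
  invFun q := (q.map φ.symm.toHom).copy (φ.symm_apply_apply u) (φ.symm_apply_apply v)
  left_inv p := by
    simp only [Walk.map_map]
    exact Walk.copy_map_of_forall_eq φ.symm_apply_apply p
  right_inv q := by
    simp only [Walk.map_copy, Walk.map_map]
    exact Walk.copy_map_of_forall_eq φ.apply_symm_apply q

@[simp]
lemma length_mapWalk (φ : G ≃g G') {u v : V} (p : G.Walk u v) :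
    (φ.mapWalk u v p).length = p.length :=
  Walk.length_map _ _

@[simp]
lemma edges_mapWalk (φ : G ≃g G') {u v : V} (p : G.Walk u v) :
    (φ.mapWalk u v p).edges = p.edges.map (Sym2.map φ) :=
  Walk.edges_map _ _

lemma edist_map (φ : G ≃g G') (u v : V) : G'.edist (φ u) (φ v) = G.edist u v := by
  simp only [edist, ← (φ.mapWalk u v).iInf_comp, length_mapWalk]

lemma dist_map (φ : G ≃g G') (u v : V) : G'.dist (φ u) (φ v) = G.dist u v := by
  rw [dist, dist, edist_map]

lemma ncard_geodesics_map (φ : G ≃g G') (u v : V) :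
    {q : G'.Walk (φ u) (φ v) | q.length = G'.dist (φ u) (φ v)}.ncard =
      {p : G.Walk u v | p.length = G.dist u v}.ncard :=
  Nat.card_congr <| ((φ.mapWalk u v).subtypeEquiv fun p => by simp [dist_map]).symm

lemma ncard_geodesics_through_map (φ : G ≃g G') (u v : V) (e : Sym2 V) :
    {q : G'.Walk (φ u) (φ v) | q.length = G'.dist (φ u) (φ v) ∧ e.map φ ∈ q.edges}.ncard =
      {p : G.Walk u v | p.length = G.dist u v ∧ e ∈ p.edges}.ncard :=
  Nat.card_congr <| ((φ.mapWalk u v).subtypeEquiv fun p => by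
    simp [dist_map, List.mem_map, (Sym2.map.injective φ.injective).eq_iff]).symm

end Iso

end SimpleGraph

namespace torusGraph

variable {d L : ℕ}

def translate (c : Fin d → ZMod L) : torusGraph d L ≃g torusGraph d L where
  toEquiv := Equiv.addLeft c
  map_rel_iff' := by simp [torusGraph, add_assoc]

@[simp]
lemma translate_apply (c x : Fin d → ZMod L) : translate c x = c + x :=
  rfl

lemma permute_add_single (σ : Equiv.Perm (Fin d)) (x : Fin d → ZMod L) (i : Fin d)
    (a : ZMod L) : (x + Pi.single i a) ∘ σ.symm = x ∘ σ.symm + Pi.single (σ i) a := by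
  rw [Pi.add_comp, Pi.single_comp_equiv, Equiv.symm_symm]

def permute (σ : Equiv.Perm (Fin d)) : torusGraph d L ≃g torusGraph d L where
  toEquiv := σ.arrowCongr (Equiv.refl _)
  map_rel_iff' {x y} := by
    have hcomp : Function.Injective fun f : Fin d → ZMod L => f ∘ σ.symm :=
      σ.symm.surjective.injective_comp_right
    show (torusGraph d L).Adj (x ∘ σ.symm) (y ∘ σ.symm) ↔ _
    simp only [torusGraph]
    rw [hcomp.ne_iff, σ.symm.exists_congr_left]
    simp only [Equiv.symm_symm, ← permute_add_single, hcomp.eq_iff]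

lemma permute_zero (σ : Equiv.Perm (Fin d)) : permute σ (0 : Fin d → ZMod L) = 0 :=
  rfl

lemma permute_single (σ : Equiv.Perm (Fin d)) (i : Fin d) (a : ZMod L) :
    permute σ (Pi.single i a) = Pi.single (σ i) a :=
  Pi.single_comp_equiv σ.symm i a

lemma exists_translate_single {e : Sym2 (Fin d → ZMod L)}
    (he : e ∈ (torusGraph d L).edgeSet) :
    ∃ c i, Sym2.map (translate c) s(0, Pi.single i 1) = e := by
  induction e with | h a b => ?_
  obtain ⟨-, i, rfl | rfl⟩ : (torusGraph d L).Adj a b := he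
  · exact ⟨a, i, by simp⟩
  · refine ⟨a + Pi.single i (-1), i, ?_⟩
    simp [Sym2.eq_swap, add_assoc, ← Pi.single_add]

theorem exists_iso_map_eq {e e' : Sym2 (Fin d → ZMod L)} (he : e ∈ (torusGraph d L).edgeSet)
    (he' : e' ∈ (torusGraph d L).edgeSet) :
    ∃ φ : torusGraph d L ≃g torusGraph d L, Sym2.map φ e = e' := by
  obtain ⟨c, i, rfl⟩ := exists_translate_single he
  obtain ⟨c', j, rfl⟩ := exists_translate_single he'
  refine ⟨(translate (-c)).trans ((permute (Equiv.swap i j)).trans (translate c')), ?_⟩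
  simp [permute_zero, permute_single]

end torusGraph

section

variable {d L : ℕ}

lemma geodesicCount_map (φ : torusGraph d L ≃g torusGraph d L) (u v : Fin d → ZMod L) :
    geodesicCount d L (φ u) (φ v) = geodesicCount d L u v :=
  φ.ncard_geodesics_map u v

lemma geodesicCountThrough_map (φ : torusGraph d L ≃g torusGraph d L) (u v : Fin d → ZMod L)
    (e : Sym2 (Fin d → ZMod L)) :
    geodesicCountThrough d L (φ u) (φ v) (e.map φ) = geodesicCountThrough d L u v e :=
  φ.ncard_geodesics_through_map u v e

end

theorem torusGraph_flow_edge_symmetric_general (d L : ℕ) [NeZero L]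
    (e e' : Sym2 (Fin d → ZMod L))
    (he : e ∈ (torusGraph d L).edgeSet) (he' : e' ∈ (torusGraph d L).edgeSet) :
    ∑ u : Fin d → ZMod L, ∑ v : Fin d → ZMod L,
        (if u ≠ v then
          (geodesicCountThrough d L u v e : ℝ) / (geodesicCount d L u v : ℝ)
        else 0)
      = ∑ u : Fin d → ZMod L, ∑ v : Fin d → ZMod L,
          (if u ≠ v then
            (geodesicCountThrough d L u v e' : ℝ) / (geodesicCount d L u v : ℝ)
          else 0) := by
  obtain ⟨φ, rfl⟩ := torusGraph.exists_iso_map_eq he he'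
  refine Fintype.sum_equiv φ.toEquiv _ _ fun u => Fintype.sum_equiv φ.toEquiv _ _ fun v => ?_
  simp [geodesicCount_map, geodesicCountThrough_map, φ.injective.ne_iff]

theorem torusGraph_flow_edge_symmetric (d L : ℕ) (hd : 1 ≤ d) (hL : 2 ≤ L) [NeZero L]
    (e e' : Sym2 (Fin d → ZMod L))
    (he : e ∈ (torusGraph d L).edgeSet) (he' : e' ∈ (torusGraph d L).edgeSet) :
    ∑ u : Fin d → ZMod L, ∑ v : Fin d → ZMod L,
        (if u ≠ v then
          (geodesicCountThrough d L u v e : ℝ) / (geodesicCount d L u v : ℝ)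
        else 0)
      = ∑ u : Fin d → ZMod L, ∑ v : Fin d → ZMod L,
          (if u ≠ v then
            (geodesicCountThrough d L u v e' : ℝ) / (geodesicCount d L u v : ℝ)
          else 0) :=
  torusGraph_flow_edge_symmetric_general d L e e' he he'
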